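/- arXiv:1907.06991 — 2 statements merged into one kernel-verified Lean document; each statement's English description precedes it below -/
import Mathlib

section
/- The least-squares minimization problem: find σ ∈ H_{g,-}(div;Ω) minimizing J₁(τ;f,g) = ‖∇·τ + γ̃(β·τ) - f‖₀² + Σᵢ ‖τ·β⊥⁽ⁱ⁾‖₀² has a unique solution, and the minimum value is zero, given by σ = βu where u ∈ W solves the transport equation ∇·(βu) + γu = f with u = g on Γ₋. -/
/-!
Since `σ = βu` is orthogonal to every `β⊥⁽ⁱ⁾` and `γ̃ (β·σ) = γu`, `J₁` vanishes at `σ`, and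
`J₁(τ; f, g)` is the homogeneous functional `J₁(τ - σ; 0, 0)` with `τ - σ ∈ H_{0,-}(div;Ω)`.
A zero of the homogeneous functional is orthogonal to all `β⊥⁽ⁱ⁾`; as these and `β` span `ℝᵈ`,
it is `βv` with `∇·(βv) + γv = 0`, and uniqueness for the homogeneous transport problem forces
`v = 0`.
-/

open MeasureTheory Real RealInnerProductSpace ENNReal

/-- The first least-squares functional
`J₁(τ; f, g) = ‖∇·τ + γ̃(β·τ) - f‖₀² + Σᵢ ‖τ·β⊥⁽ⁱ⁾‖₀²`, `γ̃ = γ/|β|²`,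
acting on pairs `p = (τ, ∇·τ)`. -/
noncomputable def lsJ1 {α : Type*} [MeasurableSpace α] {d : ℕ}
    (μ : Measure α) (β : α → EuclideanSpace ℝ (Fin d)) (γ : α → ℝ)
    (βp : Fin (d - 1) → α → EuclideanSpace ℝ (Fin d)) (f : α → ℝ)
    (p : (α → EuclideanSpace ℝ (Fin d)) × (α → ℝ)) : ℝ≥0∞ :=
  eLpNorm (fun x => p.2 x + (γ x / ‖β x‖ ^ 2) * ⟪β x, p.1 x⟫ - f x) 2 μ ^ 2
    + ∑ i, eLpNorm (fun x => ⟪p.1 x, βp i x⟫) 2 μ ^ 2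

open Submodule in
theorem mem_orthogonal_span_range_iff {E ι : Type*} [NormedAddCommGroup E]
    [InnerProductSpace ℝ E] {e : ι → E} {w : E} :
    w ∈ (span ℝ (Set.range e))ᗮ ↔ ∀ i, ⟪w, e i⟫ = 0 := by
  rw [← span_singleton_le_iff_mem, ← isOrtho_iff_le, isOrtho_span]
  simp

open Module Submodule in
theorem orthogonal_span_range_eq_span_singleton {E ι : Type*} [NormedAddCommGroup E]
    [InnerProductSpace ℝ E] [FiniteDimensional ℝ E] [Fintype ι] {e : ι → E}
    (he : Orthonormal ℝ e) (hcard : Fintype.card ι = finrank ℝ E - 1) {b : E} (hb : b ≠ 0)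
    (hbe : ∀ i, ⟪b, e i⟫ = 0) :
    (span ℝ (Set.range e))ᗮ = ℝ ∙ b := by
  have : Nontrivial E := nontrivial_of_ne b 0 hb
  have hle : ℝ ∙ b ≤ (span ℝ (Set.range e))ᗮ := by
    rwa [span_singleton_le_iff_mem, mem_orthogonal_span_range_iff]
  refine (eq_of_le_of_finrank_eq hle ?_).symm
  have hsum := (span ℝ (Set.range e)).finrank_add_finrank_orthogonal
  rw [finrank_span_eq_card he.linearIndependent, hcard] at hsum
  have := finrank_pos (R := ℝ) (M := E)
  rw [finrank_span_singleton hb]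
  omega

theorem eq_inner_div_smul_of_forall_inner_eq_zero {E ι : Type*} [NormedAddCommGroup E]
    [InnerProductSpace ℝ E] [FiniteDimensional ℝ E] [Fintype ι] {e : ι → E}
    (he : Orthonormal ℝ e) (hcard : Fintype.card ι = Module.finrank ℝ E - 1) {b : E} (hb : b ≠ 0)
    (hbe : ∀ i, ⟪b, e i⟫ = 0) {w : E} (hwe : ∀ i, ⟪w, e i⟫ = 0) :
    w = (⟪b, w⟫ / ‖b‖ ^ 2) • b := by
  have hw : w ∈ ℝ ∙ b := by
    rwa [← orthogonal_span_range_eq_span_singleton he hcard hb hbe, mem_orthogonal_span_range_iff]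
  conv_lhs => rw [← Submodule.starProjection_eq_self_iff.mpr hw, Submodule.starProjection_singleton]
  rfl

section LeastSquares

variable {α : Type*} [MeasurableSpace α] {d : ℕ} {μ : Measure α}
  {β : α → EuclideanSpace ℝ (Fin d)} {γ : α → ℝ}
  {βp : Fin (d - 1) → α → EuclideanSpace ℝ (Fin d)} {f : α → ℝ}

theorem lsJ1_eq_lsJ1_zero_sub (hβ : ∀ x, β x ≠ 0) (hperp : ∀ i x, ⟪β x, βp i x⟫ = 0)
    (u : α → ℝ) (p : (α → EuclideanSpace ℝ (Fin d)) × (α → ℝ)) :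
    lsJ1 μ β γ βp f p =
      lsJ1 μ β γ βp 0 (p.1 - fun x => u x • β x, p.2 - fun x => f x - γ x * u x) := by
  have hσ : ∀ x, γ x / ‖β x‖ ^ 2 * ⟪β x, u x • β x⟫ = γ x * u x := fun x => by
    have := norm_ne_zero_iff.mpr (hβ x)
    rw [real_inner_smul_right, real_inner_self_eq_norm_sq]
    field_simp
  simp only [lsJ1, Pi.sub_apply, Pi.zero_apply, inner_sub_right, inner_sub_left,
    real_inner_smul_left, hperp, mul_zero, sub_zero, mul_sub, hσ]
  congr 3
  funext x
  ring

theorem lsJ1_eq_zero_iff {p : (α → EuclideanSpace ℝ (Fin d)) × (α → ℝ)}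
    (hres : AEStronglyMeasurable (fun x => p.2 x + γ x / ‖β x‖ ^ 2 * ⟪β x, p.1 x⟫ - f x) μ)
    (hinner : ∀ i, AEStronglyMeasurable (fun x => ⟪p.1 x, βp i x⟫) μ) :
    lsJ1 μ β γ βp f p = 0 ↔
      (fun x => p.2 x + γ x / ‖β x‖ ^ 2 * ⟪β x, p.1 x⟫ - f x) =ᵐ[μ] 0 ∧
        ∀ i, (fun x => ⟪p.1 x, βp i x⟫) =ᵐ[μ] 0 := by
  simp only [lsJ1, add_eq_zero, Finset.sum_eq_zero_iff, Finset.mem_univ, true_implies,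
    pow_eq_zero_iff two_ne_zero, eLpNorm_eq_zero_iff hres two_ne_zero,
    eLpNorm_eq_zero_iff (hinner _) two_ne_zero]

theorem exists_ae_eq_smul_of_lsJ1_zero_eq_zero (hmβ : Measurable β) (hmγ : Measurable γ)
    (hmβp : ∀ i, Measurable (βp i)) (hβ : ∀ x, β x ≠ 0) (hperp : ∀ i x, ⟪β x, βp i x⟫ = 0)
    (horth : ∀ x, Orthonormal ℝ fun i => βp i x)
    {q : (α → EuclideanSpace ℝ (Fin d)) × (α → ℝ)} (hq₁ : AEStronglyMeasurable q.1 μ)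
    (hq₂ : AEStronglyMeasurable q.2 μ) (h : lsJ1 μ β γ βp 0 q = 0) :
    ∃ v : α → ℝ, q.1 =ᵐ[μ] (fun x => v x • β x) ∧ (fun x => q.2 x + γ x * v x) =ᵐ[μ] 0 := by
  have hinner : AEStronglyMeasurable (fun x => ⟪β x, q.1 x⟫) μ :=
    hmβ.aestronglyMeasurable.inner hq₁
  have hres : AEStronglyMeasurable
      (fun x => q.2 x + γ x / ‖β x‖ ^ 2 * ⟪β x, q.1 x⟫ - (0 : α → ℝ) x) μ :=
    (hq₂.add ((hmγ.div (hmβ.norm.pow_const 2)).aestronglyMeasurable.mul hinner)).sub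
      aestronglyMeasurable_zero
  obtain ⟨hres0, hperp0⟩ :=
    (lsJ1_eq_zero_iff hres fun i => hq₁.inner (hmβp i).aestronglyMeasurable).mp h
  have hcard :
      Fintype.card (Fin (d - 1)) = Module.finrank ℝ (EuclideanSpace ℝ (Fin d)) - 1 := by
    simp
  refine ⟨fun x => ⟪β x, q.1 x⟫ / ‖β x‖ ^ 2, ?_, ?_⟩
  · filter_upwards [ae_all_iff.mpr hperp0] with x hx
    exact eq_inner_div_smul_of_forall_inner_eq_zero (horth x) hcard (hβ x) (hperp · x) hx
  · filter_upwards [hres0] with x hx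
    simp only [Pi.zero_apply, sub_zero] at hx ⊢
    rw [← hx]
    ring

end LeastSquares

theorem stmt_5_general {α : Type*} [MeasurableSpace α] {d : ℕ}
    (μ : Measure α) (β : α → EuclideanSpace ℝ (Fin d)) (γ : α → ℝ)
    (βp : Fin (d - 1) → α → EuclideanSpace ℝ (Fin d)) (f : α → ℝ)
    (hmβ : Measurable β) (hmγ : Measurable γ) (hmβp : ∀ i, Measurable (βp i))
    (hβpos : ∀ x, 0 < ‖β x‖)
    (hperp : ∀ i x, ⟪β x, βp i x⟫ = 0)
    (horth : ∀ i j x, ⟪βp i x, βp j x⟫ = if i = j then 1 else 0)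
    -- Vg models H_{g,-}(div;Ω), V0 models H_{0,-}(div;Ω)
    (Vg V0 : Set ((α → EuclideanSpace ℝ (Fin d)) × (α → ℝ)))
    (hVgmeas : ∀ p ∈ Vg, AEStronglyMeasurable p.1 μ ∧ AEStronglyMeasurable p.2 μ)
    (hdiff : ∀ p ∈ Vg, ∀ q ∈ Vg, (p.1 - q.1, p.2 - q.2) ∈ V0)
    -- uniqueness for the homogeneous transport problem with zero inflow data
    (huniq : ∀ v : α → ℝ, ∀ p ∈ V0, (p.1 =ᵐ[μ] fun x => v x • β x) →
      ((fun x => p.2 x + γ x * v x) =ᵐ[μ] 0) → v =ᵐ[μ] 0)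
    -- u ∈ W solves the transport equation with inflow data g, so that
    -- σ = βu ∈ H_{g,-}(div;Ω) and ∇·σ = f - γu
    (u : α → ℝ)
    (hsol : ((fun x => u x • β x), (fun x => f x - γ x * u x)) ∈ Vg) :
    lsJ1 μ β γ βp f ((fun x => u x • β x), (fun x => f x - γ x * u x)) = 0 ∧
    (∀ p ∈ Vg,
      lsJ1 μ β γ βp f ((fun x => u x • β x), (fun x => f x - γ x * u x)) ≤
        lsJ1 μ β γ βp f p) ∧
    (∀ p ∈ Vg, (∀ q ∈ Vg, lsJ1 μ β γ βp f p ≤ lsJ1 μ β γ βp f q) →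
      p.1 =ᵐ[μ] (fun x => u x • β x) ∧ p.2 =ᵐ[μ] (fun x => f x - γ x * u x)) := by
  have hβ : ∀ x, β x ≠ 0 := fun x => norm_pos_iff.mp (hβpos x)
  have hJ := lsJ1_eq_lsJ1_zero_sub (μ := μ) (γ := γ) (f := f) hβ hperp u
  have hJσ : lsJ1 μ β γ βp f ((fun x => u x • β x), (fun x => f x - γ x * u x)) = 0 := by
    rw [hJ]
    simp [lsJ1]
  refine ⟨hJσ, fun p _ => hJσ ▸ zero_le, fun p hp hmin => ?_⟩
  have hJp : lsJ1 μ β γ βp 0 (p.1 - fun x => u x • β x, p.2 - fun x => f x - γ x * u x) = 0 := by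
    rw [← hJ, ← nonpos_iff_eq_zero, ← hJσ]
    exact hmin _ hsol
  obtain ⟨v, hv₁, hv₂⟩ := exists_ae_eq_smul_of_lsJ1_zero_eq_zero hmβ hmγ hmβp hβ hperp
    (fun x => orthonormal_iff_ite.mpr fun i j => horth i j x)
    ((hVgmeas p hp).1.sub (hVgmeas _ hsol).1) ((hVgmeas p hp).2.sub (hVgmeas _ hsol).2) hJp
  have hv : v =ᵐ[μ] 0 := huniq v _ (hdiff p hp _ hsol) hv₁ hv₂
  constructor
  · filter_upwards [hv₁, hv] with x hx₁ hx
    simpa [hx, sub_eq_zero] using hx₁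
  · filter_upwards [hv₂, hv] with x hx₂ hx
    simpa [hx, sub_eq_zero] using hx₂

/-- the least-squares problem `min J₁(τ; f, g)` over `H_{g,-}(div;Ω)`
(modelled as a set `Vg` of pairs `(τ, ∇·τ)`) has a unique solution, the minimum value
is zero, and the minimizer is `σ = βu`, where `u` solves the transport equation
`∇·(βu) + γu = f`, `u = g` on `Γ₋` (encoded by `(βu, f - γu) ∈ Vg`). -/
theorem stmt_5 {α : Type*} [MeasurableSpace α] {d : ℕ}
    (μ : Measure α) (β : α → EuclideanSpace ℝ (Fin d)) (γ : α → ℝ)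
    (βp : Fin (d - 1) → α → EuclideanSpace ℝ (Fin d)) (f : α → ℝ)
    (hmβ : Measurable β) (hmγ : Measurable γ) (hmβp : ∀ i, Measurable (βp i))
    (hβpos : ∀ x, 0 < ‖β x‖)
    (hperp : ∀ i x, ⟪β x, βp i x⟫ = 0)
    (horth : ∀ i j x, ⟪βp i x, βp j x⟫ = if i = j then 1 else 0)
    -- Vg models H_{g,-}(div;Ω), V0 models H_{0,-}(div;Ω)
    (Vg V0 : Set ((α → EuclideanSpace ℝ (Fin d)) × (α → ℝ)))
    (hVgmeas : ∀ p ∈ Vg, AEStronglyMeasurable p.1 μ ∧ AEStronglyMeasurable p.2 μ)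
    (hdiff : ∀ p ∈ Vg, ∀ q ∈ Vg, (p.1 - q.1, p.2 - q.2) ∈ V0)
    -- uniqueness for the homogeneous transport problem with zero inflow data
    (huniq : ∀ v : α → ℝ, ∀ p ∈ V0, (p.1 =ᵐ[μ] fun x => v x • β x) →
      ((fun x => p.2 x + γ x * v x) =ᵐ[μ] 0) → v =ᵐ[μ] 0)
    -- u ∈ W solves the transport equation with inflow data g, so that
    -- σ = βu ∈ H_{g,-}(div;Ω) and ∇·σ = f - γu
    (u : α → ℝ) (hu : AEStronglyMeasurable u μ)
    (hsol : ((fun x => u x • β x), (fun x => f x - γ x * u x)) ∈ Vg) :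
    lsJ1 μ β γ βp f ((fun x => u x • β x), (fun x => f x - γ x * u x)) = 0 ∧
    (∀ p ∈ Vg,
      lsJ1 μ β γ βp f ((fun x => u x • β x), (fun x => f x - γ x * u x)) ≤
        lsJ1 μ β γ βp f p) ∧
    (∀ p ∈ Vg, (∀ q ∈ Vg, lsJ1 μ β γ βp f p ≤ lsJ1 μ β γ βp f q) →
      p.1 =ᵐ[μ] (fun x => u x • β x) ∧ p.2 =ᵐ[μ] (fun x => f x - γ x * u x)) :=
  stmt_5_general μ β γ βp f hmβ hmγ hmβp hβpos hperp horth Vg V0 hVgmeas hdiff huniq u hsol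
end

section
/- Local efficiency of the estimators: for each element K, η_{i,K} ≤ C ‖σ - σ_h‖_{H(div;K)} with C depending only on ‖β‖_∞, ‖γ‖_∞ (and d) but not on the mesh size, where η_{1,K}² = ‖∇·σ_h + γ̃(β·σ_h) - f‖²_{0,K} + Σᵢ‖σ_h·β⊥⁽ⁱ⁾‖²_{0,K} and η_{2,K} = ‖γσ_h + β(∇·σ_h - f)‖_{0,K}. -/
open MeasureTheory Real RealInnerProductSpace ENNReal

/-!
The exact flux `σ` satisfies the first-order system, so each estimator contribution at `σ_h`
equals the same expression evaluated at the errors `σ - σ_h` and `∇·σ - ∇·σ_h`. Pointwise, these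
are bounded by `|γ̃ β|`, `|γ|`, `|β|` or `1` times the errors (the `β⊥⁽ⁱ⁾` are unit vectors),
so the local `L²` bounds only involve `L^∞` bounds of the data, never the element.
-/

namespace ENNReal

lemma sq_rpow_one_half (x : ℝ≥0∞) : (x ^ 2) ^ (1 / 2 : ℝ) = x := by
  simpa [one_div] using ENNReal.pow_rpow_inv_natCast two_ne_zero x

lemma le_rpow_one_half_sq_add_sq_left (a b : ℝ≥0∞) : a ≤ (a ^ 2 + b ^ 2) ^ (1 / 2 : ℝ) :=
  (sq_rpow_one_half a).symm.trans_le (rpow_le_rpow le_self_add (by norm_num))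

lemma le_rpow_one_half_sq_add_sq_right (a b : ℝ≥0∞) : b ≤ (a ^ 2 + b ^ 2) ^ (1 / 2 : ℝ) :=
  add_comm (a ^ 2) _ ▸ le_rpow_one_half_sq_add_sq_left b a

lemma rpow_one_half_le_of_le_sq {x y : ℝ≥0∞} (h : x ≤ y ^ 2) : x ^ (1 / 2 : ℝ) ≤ y :=
  (rpow_le_rpow h (by norm_num)).trans_eq (sq_rpow_one_half y)

variable {b c e δ M : ℝ≥0∞}

lemma mul_add_mul_le_two_mul_rpow_one_half (hb : b ≤ M) (hc : c ≤ M) :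
    b * e + c * δ ≤ 2 * M * (e ^ 2 + δ ^ 2) ^ (1 / 2 : ℝ) :=
  calc b * e + c * δ
      ≤ M * (e ^ 2 + δ ^ 2) ^ (1 / 2 : ℝ) + M * (e ^ 2 + δ ^ 2) ^ (1 / 2 : ℝ) := by
        gcongr
        exacts [le_rpow_one_half_sq_add_sq_left e δ, le_rpow_one_half_sq_add_sq_right e δ]
    _ = 2 * M * (e ^ 2 + δ ^ 2) ^ (1 / 2 : ℝ) := by ring

lemma rpow_one_half_sq_add_sum_sq_le {n : ℕ} {a : ℝ≥0∞} {s : Fin n → ℝ≥0∞} (hM : 1 ≤ M)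
    (hn : (n : ℝ≥0∞) ≤ M) (hb : b ≤ M) (ha : a ≤ b * e + δ) (hs : ∀ i, s i ≤ e) :
    (a ^ 2 + ∑ i, s i ^ 2) ^ (1 / 2 : ℝ) ≤ 3 * M * (e ^ 2 + δ ^ 2) ^ (1 / 2 : ℝ) := by
  set N := (e ^ 2 + δ ^ 2) ^ (1 / 2 : ℝ)
  have ha' : a ≤ 2 * M * N :=
    ha.trans <| by
      simpa only [one_mul] using mul_add_mul_le_two_mul_rpow_one_half (e := e) (δ := δ) hb hM
  have hs' : ∑ i, s i ^ 2 ≤ M ^ 2 * N ^ 2 :=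
    calc ∑ i, s i ^ 2 ≤ ∑ _i : Fin n, N ^ 2 :=
          Finset.sum_le_sum fun i _ => by
            gcongr; exact (hs i).trans (le_rpow_one_half_sq_add_sq_left e δ)
      _ = n * N ^ 2 := by simp
      _ ≤ M ^ 2 * N ^ 2 := by
          gcongr; exact hn.trans (sq M ▸ le_mul_of_one_le_left' hM)
  apply rpow_one_half_le_of_le_sq
  calc a ^ 2 + ∑ i, s i ^ 2 ≤ (2 * M * N) ^ 2 + M ^ 2 * N ^ 2 := by gcongr
    _ = 5 * (M * N) ^ 2 := by ring
    _ ≤ 9 * (M * N) ^ 2 := by gcongr; norm_num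
    _ = (3 * M * N) ^ 2 := by ring

end ENNReal

section

variable {V : Type*} [NormedAddCommGroup V] [InnerProductSpace ℝ V]

lemma norm_div_norm_sq_mul_inner_le (c : ℝ) (b v : V) :
    ‖c / ‖b‖ ^ 2 * ⟪b, v⟫‖ ≤ ‖c / ‖b‖‖ * ‖v‖ := by
  rcases eq_or_ne ‖b‖ 0 with hb | hb
  · simp [hb]
  calc ‖c / ‖b‖ ^ 2 * ⟪b, v⟫‖ ≤ ‖c / ‖b‖ ^ 2‖ * (‖b‖ * ‖v‖) := by
        rw [norm_mul]; gcongr; exact norm_inner_le_norm b v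
    _ = ‖c / ‖b‖‖ * ‖v‖ := by
        rw [norm_div, norm_div, norm_pow, norm_norm, sq, ← mul_assoc, div_mul_eq_mul_div,
          mul_div_mul_right _ _ hb]

variable {α : Type*} [MeasurableSpace α] {μ : Measure α} {p : ℝ≥0∞}

lemma eLpNorm_le_mul_eLpNorm_of_norm_le_mul {W E F : Type*} [NormedAddCommGroup W]
    [NormedAddCommGroup E] [NormedAddCommGroup F] {w : α → W} {f : α → E} {g : α → F}
    {B : ℝ≥0∞} (hg : AEStronglyMeasurable g μ) (hw : eLpNorm w ∞ μ ≤ B)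
    (h : ∀ᵐ x ∂μ, ‖f x‖ ≤ ‖w x‖ * ‖g x‖) : eLpNorm f p μ ≤ B * eLpNorm g p μ :=
  calc eLpNorm f p μ ≤ eLpNorm (fun x => ‖w x‖ * ‖g x‖) p μ := eLpNorm_mono_ae_real h
    _ ≤ 1 * eLpNorm w ∞ μ * eLpNorm g p μ :=
        eLpNorm_le_eLpNorm_top_mul_eLpNorm p w hg (fun a b => ‖a‖ * ‖b‖) 1
          (.of_forall fun x => by simp)
    _ ≤ B * eLpNorm g p μ := by rw [one_mul]; gcongr

variable {β σ σh : α → V} {γ f dσ dσh : α → ℝ}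

lemma eLpNorm_divergence_residual_le {B : ℝ≥0∞} (hp : 1 ≤ p) (hβ : AEStronglyMeasurable β μ)
    (hγ : AEStronglyMeasurable γ μ) (hσ : AEStronglyMeasurable σ μ)
    (hσh : AEStronglyMeasurable σh μ) (hdσ : AEStronglyMeasurable dσ μ)
    (hdσh : AEStronglyMeasurable dσh μ) (hB : eLpNorm (fun x => γ x / ‖β x‖) ∞ μ ≤ B)
    (hflux : ∀ᵐ x ∂μ, dσ x + γ x / ‖β x‖ ^ 2 * ⟪β x, σ x⟫ = f x) :
    eLpNorm (fun x => dσh x + γ x / ‖β x‖ ^ 2 * ⟪β x, σh x⟫ - f x) p μ ≤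
      B * eLpNorm (fun x => σ x - σh x) p μ + eLpNorm (fun x => dσ x - dσh x) p μ := by
  have herror : (fun x => dσh x + γ x / ‖β x‖ ^ 2 * ⟪β x, σh x⟫ - f x) =ᵐ[μ]
      -((fun x => γ x / ‖β x‖ ^ 2 * ⟪β x, σ x - σh x⟫) + fun x => dσ x - dσh x) := by
    filter_upwards [hflux] with x hx
    simp only [Pi.neg_apply, Pi.add_apply, inner_sub_right]
    linear_combination hx
  rw [eLpNorm_congr_ae herror, eLpNorm_neg]
  refine (eLpNorm_add_le ?_ ?_ hp).trans ?_
  · exact (hγ.div₀ (hβ.norm.pow 2)).mul (hβ.inner (hσ.sub hσh))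
  · exact hdσ.sub hdσh
  gcongr
  exact eLpNorm_le_mul_eLpNorm_of_norm_le_mul (hσ.sub hσh) hB
    (.of_forall fun x => norm_div_norm_sq_mul_inner_le _ _ _)

lemma eLpNorm_inner_le_of_inner_eq_zero {u : α → V} (hu : ∀ x, ‖u x‖ ≤ 1)
    (hσ : ∀ᵐ x ∂μ, ⟪σ x, u x⟫ = 0) :
    eLpNorm (fun x => ⟪σh x, u x⟫) p μ ≤ eLpNorm (fun x => σ x - σh x) p μ := by
  refine eLpNorm_mono_ae ?_
  filter_upwards [hσ] with x hx
  calc ‖⟪σh x, u x⟫‖ = ‖⟪σh x - σ x, u x⟫‖ := by rw [inner_sub_left, hx, sub_zero]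
    _ ≤ ‖σh x - σ x‖ * ‖u x‖ := norm_inner_le_norm _ _
    _ ≤ ‖σ x - σh x‖ := by
        rw [norm_sub_rev]; exact mul_le_of_le_one_right (norm_nonneg _) (hu x)

lemma eLpNorm_smul_add_smul_residual_le {Bβ Bγ : ℝ≥0∞} (hp : 1 ≤ p)
    (hβ : AEStronglyMeasurable β μ) (hγ : AEStronglyMeasurable γ μ)
    (hσ : AEStronglyMeasurable σ μ) (hσh : AEStronglyMeasurable σh μ)
    (hdσ : AEStronglyMeasurable dσ μ) (hdσh : AEStronglyMeasurable dσh μ)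
    (hBβ : eLpNorm β ∞ μ ≤ Bβ) (hBγ : eLpNorm γ ∞ μ ≤ Bγ)
    (hsys : ∀ᵐ x ∂μ, γ x • σ x + (dσ x - f x) • β x = 0) :
    eLpNorm (fun x => γ x • σh x + (dσh x - f x) • β x) p μ ≤
      Bγ * eLpNorm (fun x => σ x - σh x) p μ + Bβ * eLpNorm (fun x => dσ x - dσh x) p μ := by
  have herror : (fun x => γ x • σh x + (dσh x - f x) • β x) =ᵐ[μ]
      (fun x => γ x • (σh x - σ x)) + fun x => (dσh x - dσ x) • β x := by
    filter_upwards [hsys] with x hx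
    rw [← sub_eq_zero, ← hx]
    simp only [Pi.add_apply]
    module
  rw [eLpNorm_congr_ae herror]
  refine (eLpNorm_add_le ?_ ?_ hp).trans ?_
  · exact hγ.smul (hσh.sub hσ)
  · exact (hdσh.sub hdσ).smul hβ
  gcongr
  · refine eLpNorm_le_mul_eLpNorm_of_norm_le_mul (hσ.sub hσh) hBγ (.of_forall fun x => ?_)
    rw [norm_smul, norm_sub_rev]
  · refine eLpNorm_le_mul_eLpNorm_of_norm_le_mul (hdσ.sub hdσh) hBβ (.of_forall fun x => ?_)
    rw [norm_smul, norm_sub_rev, mul_comm]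

end

/-- local efficiency of the estimators: there is a constant `C > 0`
depending only on (bounds for) `‖β‖_∞`, `‖γ‖_∞`, `‖γ̃|β|‖_∞` and `d` — in particular
independent of the element `K` (modelled by the measure `μ`), i.e. of the mesh size —
such that for every element and every `σ_h`,
`η_{1,K} ≤ C ‖σ - σ_h‖_{H(div;K)}` and `η_{2,K} ≤ C ‖σ - σ_h‖_{H(div;K)}`,
where `σ` is the exact flux of the corresponding first-order system,
`η²_{1,K} = ‖∇·σ_h + γ̃(β·σ_h) - f‖²_{0,K} + Σᵢ ‖σ_h·β⊥⁽ⁱ⁾‖²_{0,K}`,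
`η_{2,K} = ‖γσ_h + β(∇·σ_h - f)‖_{0,K}`, and
`‖τ‖²_{H(div;K)} = ‖τ‖²_{0,K} + ‖∇·τ‖²_{0,K}`. -/
theorem stmt_16 (d : ℕ) (Bβ Bγ Bγβ : ℝ≥0∞)
    (hBβ : Bβ < ⊤) (hBγ : Bγ < ⊤) (hBγβ : Bγβ < ⊤) :
    ∃ C : ℝ≥0∞, 0 < C ∧ C < ⊤ ∧
      ∀ (α : Type) (_ : MeasurableSpace α) (μ : Measure α)
        (β : α → EuclideanSpace ℝ (Fin d)) (γ f : α → ℝ)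
        (βp : Fin (d - 1) → α → EuclideanSpace ℝ (Fin d))
        (σ σh : α → EuclideanSpace ℝ (Fin d)) (dσ dσh : α → ℝ),
        Measurable β → Measurable γ → (∀ i, Measurable (βp i)) →
        (∀ x, 0 < ‖β x‖) →
        (∀ i x, ⟪β x, βp i x⟫ = 0) →
        (∀ i j x, ⟪βp i x, βp j x⟫ = if i = j then 1 else 0) →
        AEStronglyMeasurable σ μ → AEStronglyMeasurable σh μ →
        AEStronglyMeasurable dσ μ → AEStronglyMeasurable dσh μ →
        -- bounds defining the dependence of C on the data
        eLpNorm β ∞ μ ≤ Bβ → eLpNorm γ ∞ μ ≤ Bγ →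
        eLpNorm (fun x => γ x / ‖β x‖) ∞ μ ≤ Bγβ →
        -- σ is the exact flux of the first-order system
        (∀ᵐ x ∂μ, dσ x + (γ x / ‖β x‖ ^ 2) * ⟪β x, σ x⟫ = f x) →
        (∀ i, ∀ᵐ x ∂μ, ⟪σ x, βp i x⟫ = 0) →
        (∀ᵐ x ∂μ, γ x • σ x + (dσ x - f x) • β x = 0) →
        (eLpNorm (fun x => dσh x + (γ x / ‖β x‖ ^ 2) * ⟪β x, σh x⟫ - f x) 2 μ ^ 2
              + ∑ i, eLpNorm (fun x => ⟪σh x, βp i x⟫) 2 μ ^ 2) ^ (1 / 2 : ℝ) ≤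
            C * (eLpNorm (fun x => σ x - σh x) 2 μ ^ 2
              + eLpNorm (fun x => dσ x - dσh x) 2 μ ^ 2) ^ (1 / 2 : ℝ) ∧
          eLpNorm (fun x => γ x • σh x + (dσh x - f x) • β x) 2 μ ≤
            C * (eLpNorm (fun x => σ x - σh x) 2 μ ^ 2
              + eLpNorm (fun x => dσ x - dσh x) 2 μ ^ 2) ^ (1 / 2 : ℝ) := by
  set M := 1 + Bβ + Bγ + Bγβ + (d : ℝ≥0∞)
  have hM1 : 1 ≤ M := le_add_right (le_add_right (le_add_right le_self_add))
  have hMβ : Bβ ≤ M := le_add_right (le_add_right (le_add_right le_add_self))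
  have hMγ : Bγ ≤ M := le_add_right (le_add_right le_add_self)
  have hMγβ : Bγβ ≤ M := le_add_right le_add_self
  have hMd : ((d - 1 : ℕ) : ℝ≥0∞) ≤ M := le_add_left (by gcongr; omega)
  refine ⟨3 * M, by positivity, by finiteness, ?_⟩
  intro α _ μ β γ f βp σ σh dσ dσh hβ hγ _ _ _ hon hσ hσh hdσ hdσh hβB hγB hγβB hflux hperp hsys
  have hunit : ∀ i x, ‖βp i x‖ ≤ 1 := fun i x =>
    (pow_le_one_iff_of_nonneg (norm_nonneg _) two_ne_zero).mp
      (by rw [← real_inner_self_eq_norm_sq, hon i i x, if_pos rfl])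
  refine ⟨ENNReal.rpow_one_half_sq_add_sum_sq_le hM1 hMd hMγβ
    (eLpNorm_divergence_residual_le one_le_two hβ.aestronglyMeasurable hγ.aestronglyMeasurable
      hσ hσh hdσ hdσh hγβB hflux)
    (fun i => eLpNorm_inner_le_of_inner_eq_zero (hunit i) (hperp i)), ?_⟩
  calc _ ≤ Bγ * eLpNorm (fun x => σ x - σh x) 2 μ + Bβ * eLpNorm (fun x => dσ x - dσh x) 2 μ :=
        eLpNorm_smul_add_smul_residual_le one_le_two hβ.aestronglyMeasurable
          hγ.aestronglyMeasurable hσ hσh hdσ hdσh hβB hγB hsys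
    _ ≤ 2 * M * (eLpNorm (fun x => σ x - σh x) 2 μ ^ 2
          + eLpNorm (fun x => dσ x - dσh x) 2 μ ^ 2) ^ (1 / 2 : ℝ) :=
        ENNReal.mul_add_mul_le_two_mul_rpow_one_half hMγ hMβ
    _ ≤ _ := by gcongr; norm_num
end
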